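/- arXiv:math/0112181 — 2 statements merged into one kernel-verified Lean document; each statement's English description precedes it below -/
import Mathlib

section
/- Let 1 ≤ p < ∞ and let T : ℓ^p → ℓ^p be a continuous linear operator that is semi band preserving. Then for all f, g ∈ ℓ^p there exists h ∈ ℓ^p with supp(Th) = supp(Tf) ∩ supp(Tg). -/
/-!
Write `e j` for the unit vectors. Since `p < ∞`, `(T x) i = ∑ⱼ x j · (T (e j)) i`.
If `(T (e j)) i ≠ 0`, semi band preservation applied to `e j` gives
`(T x) j = 0 → (T x) i = 0`, so the coordinate functionals at `i` and `j` are proportional and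
`i ∈ supp (T x) ↔ j ∈ supp (T x)` for every `x`. Thus `S = supp (T f) ∩ supp (T g)` is never
linked to its complement by a matrix entry of `T`, so `T (1_S f) = 1_S (T f)`, whose support is `S`.
-/

open scoped ENNReal
open Function

namespace lp

variable {ι 𝕜 : Type*} [NormedField 𝕜] {p : ℝ≥0∞}

local notation "ℓᵖ" => lp (fun _ : ι => 𝕜) p

noncomputable def indicator (s : Set ι) (x : ℓᵖ) : ℓᵖ :=
  ⟨s.indicator x, (lp.memℓp x).mono' fun i => norm_indicator_le_norm_self _ i⟩

@[simp]
theorem coe_indicator (s : Set ι) (x : ℓᵖ) : ⇑(indicator s x) = s.indicator x :=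
  rfl

variable [Fact (1 ≤ p)] [DecidableEq ι]

theorem hasSum_map_apply (hp : p ≠ ⊤) (T : ℓᵖ →L[𝕜] ℓᵖ) (x : ℓᵖ) (i : ι) :
    HasSum (fun j => x j * T (lp.single p j 1) i) (T x i) := by
  have hterm : ∀ j, (lp.evalCLM 𝕜 (fun _ => 𝕜) p i).comp T (lp.single p j (x j))
      = x j * T (lp.single p j 1) i := by
    intro j
    have hsingle : lp.single p j (x j) = x j • (lp.single p j 1 : ℓᵖ) := by
      rw [← lp.single_smul, smul_eq_mul, mul_one]
    rw [hsingle, map_smul]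
    rfl
  have hsum := (lp.hasSum_single hp x).mapL ((lp.evalCLM 𝕜 (fun _ => 𝕜) p i).comp T)
  simp only [hterm] at hsum
  exact hsum

/-- The band of sequences supported in `s` reduces `T`; in terms of the matrix entries
`T (single j 1) i`, no entry links a coordinate in `s` with one outside `s`. -/
def IsReducingSet (T : ℓᵖ →L[𝕜] ℓᵖ) (s : Set ι) : Prop :=
  ∀ i j, T (lp.single p j 1) i ≠ 0 → (i ∈ s ↔ j ∈ s)

theorem IsReducingSet.inter {T : ℓᵖ →L[𝕜] ℓᵖ} {s t : Set ι} (hs : IsReducingSet T s) (ht : IsReducingSet T t) : IsReducingSet T (s ∩ t) :=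
  fun i j hij => and_congr (hs i j hij) (ht i j hij)

theorem IsReducingSet.map_indicator (hp : p ≠ ⊤) {T : ℓᵖ →L[𝕜] ℓᵖ} {s : Set ι}
    (hs : IsReducingSet T s) (x : ℓᵖ) : ⇑(T (indicator s x)) = s.indicator (T x) := by
  ext i
  have hterm : ∀ j, indicator s x j * T (lp.single p j 1) i
      = s.indicator (fun i => x j * T (lp.single p j 1) i) i := by
    intro j
    by_cases hij : T (lp.single p j 1) i = 0
    · by_cases hi : i ∈ s <;> simp [hij, hi]
    · by_cases hj : j ∈ s
      · simp [hj, (hs i j hij).mpr hj]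
      · simp [hj, mt (hs i j hij).mp hj]
  refine (hasSum_map_apply hp T (indicator s x) i).unique ?_
  simp only [hterm]
  by_cases hi : i ∈ s
  · simpa [hi] using hasSum_map_apply hp T x i
  · simp [hi, hasSum_zero]

def IsSemiBandPreserving (T : ℓᵖ →L[𝕜] ℓᵖ) : Prop :=
  ∀ f g : ℓᵖ, Disjoint (support f) (support (T g)) → Disjoint (support (T f)) (support (T g))

namespace IsSemiBandPreserving

variable {T : lp (fun _ : ι => 𝕜) p →L[𝕜] lp (fun _ : ι => 𝕜) p} (hT : IsSemiBandPreserving T)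
include hT

theorem apply_eq_zero {x : ℓᵖ} {i j : ι} (hxj : T x j = 0)
    (hij : T (lp.single p j 1) i ≠ 0) : T x i = 0 := by
  have hdisj : Disjoint (support (lp.single p j (1 : 𝕜))) (support (T x)) := by
    refine Set.disjoint_left.mpr fun n hn hxn => hxn ?_
    obtain rfl : n = j := by
      by_contra hnj
      exact hn (lp.single_apply_ne p j 1 hnj)
    exact hxj
  exact notMem_support.mp (Set.disjoint_left.mp (hT _ _ hdisj) hij)

theorem apply_single_self_ne_zero {i j : ι} (hij : T (lp.single p j 1) i ≠ 0) :
    T (lp.single p j 1) j ≠ 0 :=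
  fun hjj => hij (hT.apply_eq_zero hjj hij)

theorem apply_eq_mul_apply {i j : ι} (hij : T (lp.single p j 1) i ≠ 0) (x : ℓᵖ) :
    T x i = T (lp.single p j 1) i / T (lp.single p j 1) j * T x j := by
  have hjj := hT.apply_single_self_ne_zero hij
  set c := T x j / T (lp.single p j 1) j
  have hy : ∀ n, T (x - c • lp.single p j 1) n = T x n - c * T (lp.single p j 1) n := by
    intro n
    rw [map_sub, map_smul, lp.coeFn_sub, lp.coeFn_smul]
    rfl
  have hyj : T (x - c • lp.single p j 1) j = 0 := by
    rw [hy, div_mul_cancel₀ _ hjj, sub_self]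
  have hyi := hT.apply_eq_zero hyj hij
  rw [hy, sub_eq_zero] at hyi
  rw [hyi]
  ring

theorem isReducingSet_support (x : ℓᵖ) : IsReducingSet T (support (T x)) := by
  intro i j hij
  have hc : T (lp.single p j 1) i / T (lp.single p j 1) j ≠ 0 :=
    div_ne_zero hij (hT.apply_single_self_ne_zero hij)
  rw [mem_support, mem_support, hT.apply_eq_mul_apply hij x]
  exact mul_ne_zero_iff_left hc

end IsSemiBandPreserving

end lp

/-- If `T` is a semi band preserving continuous linear operator on `ℓ^p`
(`1 ≤ p < ∞`), then for all `f, g` the set `supp (T f) ∩ supp (T g)` is the support of some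
element of the range of `T`. -/
theorem lp_sbp_exists_support_eq_inter
    (p : ℝ≥0∞) [Fact (1 ≤ p)] (hp : p ≠ ⊤)
    (T : lp (fun _ : ℕ => ℝ) p →L[ℝ] lp (fun _ : ℕ => ℝ) p)
    (hSBP : ∀ f g : lp (fun _ : ℕ => ℝ) p,
      {n : ℕ | f n ≠ 0} ∩ {n : ℕ | T g n ≠ 0} = ∅ →
      {n : ℕ | T f n ≠ 0} ∩ {n : ℕ | T g n ≠ 0} = ∅)
    (f g : lp (fun _ : ℕ => ℝ) p) :
    ∃ h : lp (fun _ : ℕ => ℝ) p,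
      {n : ℕ | T h n ≠ 0} = {n : ℕ | T f n ≠ 0} ∩ {n : ℕ | T g n ≠ 0} := by
  have hT : lp.IsSemiBandPreserving T := fun f g hfg =>
    Set.disjoint_iff_inter_eq_empty.mpr (hSBP f g (Set.disjoint_iff_inter_eq_empty.mp hfg))
  set s := support (T f) ∩ support (T g)
  have hs : lp.IsReducingSet T s :=
    (hT.isReducingSet_support f).inter (hT.isReducingSet_support g)
  refine ⟨lp.indicator s f, ?_⟩
  change support (T (lp.indicator s f)) = s
  rw [hs.map_indicator hp, Set.support_indicator, Set.inter_eq_left]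
  exact Set.inter_subset_left
end

section
/- Let 1 ≤ p < ∞ and let T : ℓ^p → ℓ^p be a continuous linear operator that is semi band preserving. If (f_j)_{j∈ℕ} is a sequence in ℓ^p with supp(T f_{j+1}) ⊆ supp(T f_j) for all j ∈ ℕ, then there exists h ∈ ℓ^p with supp(Th) = ⋂_{j∈ℕ} supp(T f_j). -/
open scoped ENNReal

/-!
Write `e i` for the unit vectors and `S = ⋂ j, supp (T f_j)`. Continuity of `T` and
`x = ∑ x i • e i` give `T x k = ∑ x i * T (e i) k`. Semi band preservation, applied to `e i`,
says: if `T g k ≠ 0` and `T (e i) k ≠ 0`, then `T g i ≠ 0`. Applied to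
`g = T x i • y - T y i • x`, which vanishes at `i`, it yields `T x i * T y k = T y i * T x k`
whenever `T (e i) k ≠ 0`. The witness is `f j₀` restricted to the set of indices `i` with
`T (e i) k ≠ 0` for some `k ∈ S`: on `S` the expansion shows that `T h` agrees with `T (f j₀)`,
and off `S` the identity above, with `x = h` and `y = f j`, forces `T h k = 0`.
-/

open Function

variable {α 𝕜 : Type*} [NormedField 𝕜] {p : ℝ≥0∞}

def IsSemiBandPreserving (T : lp (fun _ : α => 𝕜) p → lp (fun _ : α => 𝕜) p) : Prop :=
  ∀ f g : lp (fun _ : α => 𝕜) p,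
    Disjoint (support ⇑f) (support ⇑(T g)) → Disjoint (support ⇑(T f)) (support ⇑(T g))

theorem Memℓp.indicator {E : Type*} [NormedAddCommGroup E] {f : α → E} (hf : Memℓp f p)
    (s : Set α) : Memℓp (s.indicator f) p :=
  hf.mono' fun i => norm_indicator_le_norm_self f i

namespace lp

variable [DecidableEq α] [Fact (1 ≤ p)] {β : Type*} {q : ℝ≥0∞} [Fact (1 ≤ q)]
  (T : lp (fun _ : α => 𝕜) p →L[𝕜] lp (fun _ : β => 𝕜) q)

theorem hasSum_mul_map_single_apply (hp : p ≠ ⊤) (x : lp (fun _ : α => 𝕜) p) (k : β) :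
    HasSum (fun i => x i * T (lp.single p i 1) k) (T x k) := by
  have hsingle : ∀ i, (lp.single p i (x i) : lp (fun _ : α => 𝕜) p) = x i • lp.single p i 1 :=
    fun i => by rw [← lp.single_smul, smul_eq_mul, mul_one]
  have h := ((evalCLM 𝕜 _ q k).comp T).hasSum (lp.hasSum_single hp x)
  simp only [ContinuousLinearMap.comp_apply, hsingle, map_smul] at h
  exact h

theorem map_apply_eq_of_forall_map_single_apply_ne_zero (hp : p ≠ ⊤)
    {x y : lp (fun _ : α => 𝕜) p} {k : β}
    (hxy : ∀ i, T (lp.single p i 1) k ≠ 0 → x i = y i) : T x k = T y k := by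
  refine (hasSum_mul_map_single_apply T hp x k).unique ?_
  convert hasSum_mul_map_single_apply T hp y k using 2 with i
  by_cases hi : T (lp.single p i 1) k = 0
  · simp only [hi, mul_zero]
  · rw [hxy i hi]

theorem exists_apply_ne_zero_of_map_apply_ne_zero (hp : p ≠ ⊤)
    {x : lp (fun _ : α => 𝕜) p} {k : β} (hx : T x k ≠ 0) :
    ∃ i, x i ≠ 0 ∧ T (lp.single p i 1) k ≠ 0 := by
  by_contra! H
  have h0 : T x k = T 0 k :=
    map_apply_eq_of_forall_map_single_apply_ne_zero T hp fun i hi => not_imp_comm.1 (H i) hi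
  exact hx (by simpa using h0)

end lp

namespace IsSemiBandPreserving

section single

variable [DecidableEq α]

theorem map_apply_ne_zero_of_map_single_apply_ne_zero
    {T : lp (fun _ : α => 𝕜) p → lp (fun _ : α => 𝕜) p} (hT : IsSemiBandPreserving T)
    {g : lp (fun _ : α => 𝕜) p} {i k : α} (hg : T g k ≠ 0) (hi : T (lp.single p i 1) k ≠ 0) :
    T g i ≠ 0 := by
  intro hgi
  have hdisj : Disjoint (support ⇑(lp.single p i (1 : 𝕜))) (support ⇑(T g)) := by
    refine Set.disjoint_left.2 fun n hn hn' => ?_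
    obtain rfl : n = i := by
      by_contra hni
      exact hn (lp.single_apply_ne p i _ hni)
    exact hn' hgi
  exact Set.disjoint_left.1 (hT _ _ hdisj) hi hg

theorem map_apply_mul_map_apply_comm
    {T : lp (fun _ : α => 𝕜) p →ₗ[𝕜] lp (fun _ : α => 𝕜) p} (hT : IsSemiBandPreserving T)
    (x y : lp (fun _ : α => 𝕜) p) {i k : α} (hi : T (lp.single p i 1) k ≠ 0) :
    T x i * T y k = T y i * T x k := by
  set g := T x i • y - T y i • x
  have hTg : ∀ n, T g n = T x i * T y n - T y i * T x n := fun n => by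
    simp only [g, map_sub, map_smul]
    rfl
  have hgk : T g k = 0 := by
    by_contra hgk
    exact hT.map_apply_ne_zero_of_map_single_apply_ne_zero hgk hi (by rw [hTg]; ring)
  rwa [hTg, sub_eq_zero] at hgk

end single

theorem exists_support_eq_iInter [Fact (1 ≤ p)] (hp : p ≠ ⊤)
    {T : lp (fun _ : α => 𝕜) p →L[𝕜] lp (fun _ : α => 𝕜) p} (hT : IsSemiBandPreserving T)
    {ι : Type*} [Nonempty ι] (f : ι → lp (fun _ : α => 𝕜) p) :
    ∃ h, support ⇑(T h) = ⋂ j, support ⇑(T (f j)) := by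
  classical
  obtain ⟨j₀⟩ := ‹Nonempty ι›
  set S := ⋂ j, support ⇑(T (f j))
  set U := {i | ∃ k ∈ S, T (lp.single p i 1) k ≠ 0}
  obtain ⟨h, hh⟩ : ∃ h : lp (fun _ : α => 𝕜) p, ⇑h = U.indicator (f j₀) :=
    ⟨⟨_, (lp.memℓp _).indicator U⟩, rfl⟩
  refine ⟨h, Set.Subset.antisymm (fun k hk => ?_) fun k hk => ?_⟩
  · obtain ⟨i, hi, hik⟩ := lp.exists_apply_ne_zero_of_map_apply_ne_zero T hp hk
    have hiU : i ∈ U := by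
      by_contra hiU
      exact hi (by rw [hh, Set.indicator_of_notMem hiU])
    obtain ⟨k', hk'S, hik'⟩ := hiU
    refine Set.mem_iInter.2 fun j hfjk => ?_
    have hfji : T (f j) i ≠ 0 :=
      hT.map_apply_ne_zero_of_map_single_apply_ne_zero (Set.mem_iInter.1 hk'S j) hik'
    have hcomm := map_apply_mul_map_apply_comm (T := T.toLinearMap) hT h (f j) hik
    simp only [ContinuousLinearMap.coe_coe, hfjk, mul_zero] at hcomm
    exact mul_ne_zero hfji hk hcomm.symm
  · have hTh : T h k = T (f j₀) k :=
      lp.map_apply_eq_of_forall_map_single_apply_ne_zero T hp fun i hi => by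
        rw [hh, Set.indicator_of_mem (show i ∈ U from ⟨k, hk, hi⟩)]
    rw [mem_support, hTh]
    exact Set.mem_iInter.1 hk j₀

end IsSemiBandPreserving

theorem lp_sbp_exists_support_eq_iInter_general
    (p : ℝ≥0∞) [Fact (1 ≤ p)] (hp : p ≠ ⊤)
    (T : lp (fun _ : ℕ => ℝ) p →L[ℝ] lp (fun _ : ℕ => ℝ) p)
    (hSBP : ∀ f g : lp (fun _ : ℕ => ℝ) p,
      {n : ℕ | f n ≠ 0} ∩ {n : ℕ | T g n ≠ 0} = ∅ →
      {n : ℕ | T f n ≠ 0} ∩ {n : ℕ | T g n ≠ 0} = ∅)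
    (f : ℕ → lp (fun _ : ℕ => ℝ) p) :
    ∃ h : lp (fun _ : ℕ => ℝ) p,
      {n : ℕ | T h n ≠ 0} = ⋂ j : ℕ, {n : ℕ | T (f j) n ≠ 0} :=
  IsSemiBandPreserving.exists_support_eq_iInter (T := T) hp
    (fun f g hfg => Set.disjoint_iff_inter_eq_empty.2 <|
      hSBP f g (Set.disjoint_iff_inter_eq_empty.1 hfg)) f

/-- If `T` is a semi band preserving continuous linear operator on `ℓ^p`
(`1 ≤ p < ∞`) and `(f_j)` is a sequence with decreasing supports of `T f_j`, then
`⋂ j, supp (T f_j)` is the support of some element of the range of `T`. -/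
theorem lp_sbp_exists_support_eq_iInter
    (p : ℝ≥0∞) [Fact (1 ≤ p)] (hp : p ≠ ⊤)
    (T : lp (fun _ : ℕ => ℝ) p →L[ℝ] lp (fun _ : ℕ => ℝ) p)
    (hSBP : ∀ f g : lp (fun _ : ℕ => ℝ) p,
      {n : ℕ | f n ≠ 0} ∩ {n : ℕ | T g n ≠ 0} = ∅ →
      {n : ℕ | T f n ≠ 0} ∩ {n : ℕ | T g n ≠ 0} = ∅)
    (f : ℕ → lp (fun _ : ℕ => ℝ) p)
    (hdec : ∀ j : ℕ, {n : ℕ | T (f (j + 1)) n ≠ 0} ⊆ {n : ℕ | T (f j) n ≠ 0}) :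
    ∃ h : lp (fun _ : ℕ => ℝ) p,
      {n : ℕ | T h n ≠ 0} = ⋂ j : ℕ, {n : ℕ | T (f j) n ≠ 0} :=
  lp_sbp_exists_support_eq_iInter_general p hp T hSBP f
end
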